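/- Under the hypotheses of the preceding construction—β_i a given smooth vector field on ℝ × ℝ³; A_ij, κ smooth fields satisfying ∂_t∂_t A_ij = ΔA_ij and ∂_t∂_t κ = Δκ; smooth initial fields γ̃⁰_ij, Γ⁰_i, α⁰, φ⁰ on ℝ³ with ∂_t A_ij(0,·) = −(1/2)Δγ̃⁰_ij + (1/2)(∂_i Γ⁰_j + ∂_j Γ⁰_i) − 2∂_i∂_j φ⁰ − 2δ_ij Δφ⁰ − ∂_i∂_j α⁰ + (1/3)δ_ij Δα⁰ and ∂_t κ(0,·) = −Δα⁰; and φ, α, γ̃_ij, Γ_i defined by the time-integral formulas φ = φ⁰ + ∫₀ᵗ[−(1/6)κ + (1/6)∂_l β_l], α = α⁰ − ∫₀ᵗ κ, γ̃_ij = γ̃⁰_ij + ∫₀ᵗ[−2A_ij + ∂_i β_j + ∂_j β_i − (2/3)δ_ij ∂_l β_l], Γ_i = Γ⁰_i + ∫₀ᵗ[−(4/3)∂_i κ + (1/3)∂_i(∂_p β_p) + Δβ_i]—assume moreover that A and κ satisfy the momentum constraint ∂_l A_il − (2/3)∂_i κ = 0 at every point of ℝ × ℝ³, and that the initial data satisfy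 the constraints ∂_l∂_j γ̃⁰_lj − 8Δφ⁰ = 0, ∂_l Γ⁰_l − 8Δφ⁰ = 0, and Γ⁰_i = ∂_l γ̃⁰_il on ℝ³. Then for every (t,x) ∈ ℝ × ℝ³ the constructed fields satisfy the constraints ∂_l∂_j γ̃_lj − 8Δφ = 0, ∂_l Γ_l − 8Δφ = 0, and Γ_i = ∂_l γ̃_il. -/

import Mathlib

noncomputable section

/-- Spacetime ℝ × ℝ³. -/
abbrev Spc : Type := ℝ × (Fin 3 → ℝ)

/-- Time derivative ∂_t. -/
noncomputable def pt (f : Spc → ℝ) : Spc → ℝ :=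
  fun p => deriv (fun s => f (s, p.2)) p.1

/-- Spatial partial derivative ∂_i. -/
noncomputable def ps (i : Fin 3) (f : Spc → ℝ) : Spc → ℝ :=
  fun p => deriv (fun s => f (p.1, Function.update p.2 i s)) (p.2 i)

/-- Spatial Laplacian Δ = Σ_i ∂_i ∂_i. -/
noncomputable def lap (f : Spc → ℝ) : Spc → ℝ :=
  fun p => ∑ i : Fin 3, ps i (ps i f) p

/-- Kronecker delta δ_ij. -/
noncomputable def kron (i j : Fin 3) : ℝ := if i = j then 1 else 0

/-- Spatial partial derivative ∂_i on ℝ³ (for initial-data fields). -/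
noncomputable def d (i : Fin 3) (f : (Fin 3 → ℝ) → ℝ) : (Fin 3 → ℝ) → ℝ :=
  fun x => deriv (fun s => f (Function.update x i s)) (x i)

/-- Spatial Laplacian on ℝ³ (for initial-data fields). -/
noncomputable def lapS (f : (Fin 3 → ℝ) → ℝ) : (Fin 3 → ℝ) → ℝ :=
  fun x => ∑ i : Fin 3, d i (d i f) x

/-!
Each constructed field has the form `f (t, x) = f₀ x + ∫₀ᵗ g (s, x) ds` with smooth initial value
`f₀` and rate `g`, and spatial derivatives pass under the time integral. So each constraint at
`(t, x)` is its value on the initial data, which is zero, plus the time integral of the same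
constraint evaluated on the rates. The momentum constraint makes the latter vanish identically:
`∂_l` of the rate of `γ̃_il` is the rate of `Γ_i`, and, as partial derivatives commute, the
divergence of the rate of `Γ` is `8Δ` of the rate of `φ`. The Hamiltonian constraint for `γ̃` on
the rates is the divergence of the first of these identities.
-/

open Function MeasureTheory Filter
open scoped ContDiff

theorem hasDerivAt_intervalIntegral_of_continuous {E : Type*} [NormedAddCommGroup E]
    [NormedSpace ℝ E] {F F' : ℝ → ℝ → E} (hF : Continuous (uncurry F))
    (hF' : Continuous (uncurry F')) (hdiff : ∀ r s, HasDerivAt (F · s) (F' r s) r)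
    (a b r₀ : ℝ) :
    HasDerivAt (fun r => ∫ s in a..b, F r s) (∫ s in a..b, F' r₀ s) r₀ := by
  obtain ⟨C, hC⟩ := ((isCompact_closedBall r₀ 1).prod isCompact_uIcc).exists_bound_of_continuousOn
    hF'.continuousOn
  exact (intervalIntegral.hasDerivAt_integral_of_dominated_loc_of_deriv_le (bound := fun _ => C)
    (Metric.ball_mem_nhds r₀ one_pos)
    (Eventually.of_forall fun r => (hF.uncurry_left r).aestronglyMeasurable)
    ((hF.uncurry_left r₀).intervalIntegrable a b) (hF'.uncurry_left r₀).aestronglyMeasurable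
    (ae_of_all _ fun s hs r hr =>
      hC (r, s) ⟨Metric.ball_subset_closedBall hr, Set.uIoc_subset_uIcc hs⟩)
    intervalIntegrable_const (ae_of_all _ fun s _ r _ => hdiff r s)).2

section PartialDeriv

variable {f g : Spc → ℝ} (i j : Fin 3)

theorem hasDerivAt_comp_update {t : ℝ} {x : Fin 3 → ℝ} {r : ℝ}
    (hf : DifferentiableAt ℝ f (t, update x i r)) :
    HasDerivAt (fun s => f (t, update x i s))
      (fderiv ℝ f (t, update x i r) (0, Pi.single i 1)) r :=
  hf.hasFDerivAt.comp_hasDerivAt r ((hasDerivAt_const r t).prodMk (hasDerivAt_update x i r))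

theorem ps_eq_fderiv {p : Spc} (hf : DifferentiableAt ℝ f p) :
    ps i f p = fderiv ℝ f p (0, Pi.single i 1) := by
  obtain ⟨t, x⟩ := p
  have h := hasDerivAt_comp_update (r := x i) i (f := f) (by rwa [update_eq_self])
  rw [update_eq_self] at h
  exact h.deriv

theorem hasDerivAt_ps (hf : Differentiable ℝ f) (t : ℝ) (x : Fin 3 → ℝ) (r : ℝ) :
    HasDerivAt (fun s => f (t, update x i s)) (ps i f (t, update x i r)) r := by
  rw [ps_eq_fderiv i (hf _)]
  exact hasDerivAt_comp_update i (hf _)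

theorem hasDerivAt_ps_self (hf : Differentiable ℝ f) (p : Spc) :
    HasDerivAt (fun s => f (p.1, update p.2 i s)) (ps i f p) (p.2 i) := by
  simpa only [update_eq_self] using hasDerivAt_ps i hf p.1 p.2 (p.2 i)

@[fun_prop]
theorem contDiff_ps (hf : ContDiff ℝ ∞ f) : ContDiff ℝ ∞ (ps i f) := by
  rw [show ps i f = fun p => fderiv ℝ f p (0, Pi.single i 1) from
    funext fun p => ps_eq_fderiv i (hf.differentiable (by simp) p)]
  exact (hf.fderiv_right (by simp)).clm_apply contDiff_const

theorem ps_comm (hf : ContDiff ℝ 2 f) : ps i (ps j f) = ps j (ps i f) := by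
  have hf' : Differentiable ℝ (fderiv ℝ f) :=
    (hf.fderiv_right (by norm_num)).differentiable one_ne_zero
  have hsnd (k l : Fin 3) (p : Spc) :
      ps k (ps l f) p = fderiv ℝ (fderiv ℝ f) p (0, Pi.single k 1) (0, Pi.single l 1) := by
    rw [show ps l f = fun p => fderiv ℝ f p (0, Pi.single l 1) from
        funext fun p => ps_eq_fderiv l (hf.differentiable (by norm_num) p),
      ps_eq_fderiv k ((hf' p).clm_apply (differentiableAt_const _)),
      fderiv_clm_apply (hf' p) (differentiableAt_const _)]
    simp
  funext p
  rw [hsnd, hsnd, (hf.contDiffAt.isSymmSndFDerivAt (by simp)).eq]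

theorem ps_add (hf : Differentiable ℝ f) (hg : Differentiable ℝ g) :
    ps i (fun q => f q + g q) = fun q => ps i f q + ps i g q :=
  funext fun p => ((hasDerivAt_ps_self i hf p).add (hasDerivAt_ps_self i hg p)).deriv

theorem ps_sub (hf : Differentiable ℝ f) (hg : Differentiable ℝ g) :
    ps i (fun q => f q - g q) = fun q => ps i f q - ps i g q :=
  funext fun p => ((hasDerivAt_ps_self i hf p).sub (hasDerivAt_ps_self i hg p)).deriv

theorem ps_const_mul (c : ℝ) (hf : Differentiable ℝ f) :
    ps i (fun q => c * f q) = fun q => c * ps i f q :=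
  funext fun p => ((hasDerivAt_ps_self i hf p).const_mul c).deriv

theorem ps_sum {ι : Type*} (s : Finset ι) {F : ι → Spc → ℝ}
    (hF : ∀ c ∈ s, Differentiable ℝ (F c)) :
    ps i (fun q => ∑ c ∈ s, F c q) = fun q => ∑ c ∈ s, ps i (F c) q :=
  funext fun p => (HasDerivAt.fun_sum fun c hc => hasDerivAt_ps_self i (hF c hc) p).deriv

@[fun_prop]
theorem contDiff_lap (hf : ContDiff ℝ ∞ f) : ContDiff ℝ ∞ (lap f) := by
  unfold lap; fun_prop

theorem ps_lap (hf : ContDiff ℝ ∞ f) : ps i (lap f) = lap (ps i f) := by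
  unfold lap
  simp (disch := fun_prop (disch := simp)) only [ps_sum]
  funext q
  refine Finset.sum_congr rfl fun c _ => ?_
  rw [ps_comm i c (by fun_prop (disch := norm_cast)), ps_comm i c (hf.of_le (by norm_cast))]

end PartialDeriv

section SpatialDeriv

variable {f : (Fin 3 → ℝ) → ℝ} (i : Fin 3) {x : Fin 3 → ℝ}

theorem hasDerivAt_d (hf : DifferentiableAt ℝ f x) :
    HasDerivAt (fun s => f (update x i s)) (d i f x) (x i) := by
  rw [← update_eq_self i x] at hf
  exact (hf.hasFDerivAt.comp_hasDerivAt _ (hasDerivAt_update x i (x i))).differentiableAt.hasDerivAt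

theorem d_eq_fderiv (hf : DifferentiableAt ℝ f x) : d i f x = fderiv ℝ f x (Pi.single i 1) := by
  rw [← update_eq_self i x] at hf
  have h := (hf.hasFDerivAt.comp_hasDerivAt _ (hasDerivAt_update x i (x i))).deriv
  rwa [update_eq_self] at h

theorem contDiff_d (hf : ContDiff ℝ ∞ f) : ContDiff ℝ ∞ (d i f) := by
  rw [show d i f = fun x => fderiv ℝ f x (Pi.single i 1) from
    funext fun x => d_eq_fderiv i (hf.differentiable (by simp) x)]
  exact (hf.fderiv_right (by simp)).clm_apply contDiff_const

end SpatialDeriv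

structure IsTimeIntegral (f : Spc → ℝ) (f₀ : (Fin 3 → ℝ) → ℝ) (g : Spc → ℝ) : Prop where
  contDiff_initial : ContDiff ℝ ∞ f₀
  contDiff_rate : ContDiff ℝ ∞ g
  eq_add_integral : ∀ t x, f (t, x) = f₀ x + ∫ s in (0 : ℝ)..t, g (s, x)

namespace IsTimeIntegral

variable {f h : Spc → ℝ} {f₀ h₀ : (Fin 3 → ℝ) → ℝ} {g k : Spc → ℝ}

theorem intervalIntegrable_rate (hf : IsTimeIntegral f f₀ g) (x : Fin 3 → ℝ) (t : ℝ) :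
    IntervalIntegrable (fun s => g (s, x)) volume 0 t :=
  (hf.contDiff_rate.continuous.comp (Continuous.prodMk_left x)).intervalIntegrable 0 t

theorem sub (hf : IsTimeIntegral f f₀ g) (hh : IsTimeIntegral h h₀ k) :
    IsTimeIntegral (fun p => f p - h p) (fun x => f₀ x - h₀ x) (fun p => g p - k p) where
  contDiff_initial := hf.contDiff_initial.sub hh.contDiff_initial
  contDiff_rate := hf.contDiff_rate.sub hh.contDiff_rate
  eq_add_integral t x := by
    rw [hf.eq_add_integral, hh.eq_add_integral, intervalIntegral.integral_sub
      (hf.intervalIntegrable_rate x t) (hh.intervalIntegrable_rate x t)]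
    ring

theorem const_mul (hf : IsTimeIntegral f f₀ g) (c : ℝ) :
    IsTimeIntegral (fun p => c * f p) (fun x => c * f₀ x) (fun p => c * g p) where
  contDiff_initial := contDiff_const.mul hf.contDiff_initial
  contDiff_rate := contDiff_const.mul hf.contDiff_rate
  eq_add_integral t x := by
    rw [hf.eq_add_integral, intervalIntegral.integral_const_mul, mul_add]

theorem sum {ι : Type*} {s : Finset ι} {f : ι → Spc → ℝ} {f₀ : ι → (Fin 3 → ℝ) → ℝ}
    {g : ι → Spc → ℝ} (hf : ∀ c, IsTimeIntegral (f c) (f₀ c) (g c)) :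
    IsTimeIntegral (fun p => ∑ c ∈ s, f c p) (fun x => ∑ c ∈ s, f₀ c x)
      (fun p => ∑ c ∈ s, g c p) where
  contDiff_initial := ContDiff.sum fun c _ => (hf c).contDiff_initial
  contDiff_rate := ContDiff.sum fun c _ => (hf c).contDiff_rate
  eq_add_integral t x := by
    rw [intervalIntegral.integral_finsetSum fun c _ => (hf c).intervalIntegrable_rate x t,
      ← Finset.sum_add_distrib]
    exact Finset.sum_congr rfl fun c _ => (hf c).eq_add_integral t x

theorem ps (hf : IsTimeIntegral f f₀ g) (i : Fin 3) :
    IsTimeIntegral (ps i f) (d i f₀) (ps i g) where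
  contDiff_initial := contDiff_d i hf.contDiff_initial
  contDiff_rate := contDiff_ps i hf.contDiff_rate
  eq_add_integral t x := by
    have hg := hf.contDiff_rate
    have h₀ := hasDerivAt_d i (hf.contDiff_initial.differentiable (by simp) x)
    have h₁ := hasDerivAt_intervalIntegral_of_continuous (F := fun r s => g (s, update x i r))
      (F' := fun r s => _root_.ps i g (s, update x i r)) (by fun_prop) (by fun_prop)
      (fun r s => hasDerivAt_ps i (hg.differentiable (by simp)) s x r) 0 t (x i)
    simp only [update_eq_self] at h₁
    show deriv (fun r => f (t, update x i r)) (x i) = _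
    simp only [hf.eq_add_integral]
    exact (h₀.add h₁).deriv

theorem lap (hf : IsTimeIntegral f f₀ g) : IsTimeIntegral (lap f) (lapS f₀) (lap g) :=
  sum fun c => (hf.ps c).ps c

theorem eq_zero (hf : IsTimeIntegral f f₀ g) (h₀ : ∀ x, f₀ x = 0) (hg : ∀ p, g p = 0)
    (p : Spc) : f p = 0 := by
  rw [hf.eq_add_integral, h₀]
  simp [hg]

end IsTimeIntegral

def divergence (β : Fin 3 → Spc → ℝ) : Spc → ℝ := fun q => ∑ a, ps a (β a) q

/-! The integrands of the time-integral formulas for `γ̃_ij`, `Γ_i` and `φ`. -/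

def rateγ (A : Fin 3 → Fin 3 → Spc → ℝ) (β : Fin 3 → Spc → ℝ) (i j : Fin 3) : Spc → ℝ :=
  fun q => -2 * A i j q + ps i (β j) q + ps j (β i) q - 2 / 3 * kron i j * divergence β q

def rateΓ (κ : Spc → ℝ) (β : Fin 3 → Spc → ℝ) (i : Fin 3) : Spc → ℝ :=
  fun q => -(4 / 3) * ps i κ q + 1 / 3 * ps i (divergence β) q + lap (β i) q

def rateφ (κ : Spc → ℝ) (β : Fin 3 → Spc → ℝ) : Spc → ℝ :=
  fun q => -(1 / 6) * κ q + 1 / 6 * divergence β q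

section Rates

variable {β : Fin 3 → Spc → ℝ} {A : Fin 3 → Fin 3 → Spc → ℝ} {κ : Spc → ℝ}
  (hβ : ∀ i, ContDiff ℝ ∞ (β i)) (hA : ∀ i j, ContDiff ℝ ∞ (A i j)) (hκ : ContDiff ℝ ∞ κ)

include hβ

@[fun_prop]
theorem contDiff_divergence : ContDiff ℝ ∞ (divergence β) := by
  unfold divergence; fun_prop

include hA in
@[fun_prop]
theorem contDiff_rateγ (i j : Fin 3) : ContDiff ℝ ∞ (rateγ A β i j) := by
  unfold rateγ; fun_prop

include hκ in
theorem contDiff_rateΓ (i : Fin 3) : ContDiff ℝ ∞ (rateΓ κ β i) := by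
  unfold rateΓ; fun_prop

include hκ in
theorem contDiff_rateφ : ContDiff ℝ ∞ (rateφ κ β) := by
  unfold rateφ; fun_prop

theorem sum_ps_ps_eq_ps_divergence (i : Fin 3) (q : Spc) :
    ∑ a, ps a (ps i (β a)) q = ps i (divergence β) q := by
  unfold divergence
  simp (disch := fun_prop (disch := simp)) only [ps_sum]
  exact Finset.sum_congr rfl fun a _ => congrFun (ps_comm a i ((hβ a).of_le (by norm_cast))) q

theorem sum_ps_lap_eq_lap_divergence (q : Spc) :
    ∑ a, ps a (lap (β a)) q = lap (divergence β) q := by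
  simp only [fun a => ps_lap a (hβ a)]
  unfold lap divergence
  simp (disch := fun_prop (disch := simp)) only [ps_sum]
  exact Finset.sum_comm

include hA in
theorem sum_ps_rateγ_eq_rateΓ (i : Fin 3) (q : Spc)
    (hMom : ∑ a, ps a (A i a) q - 2 / 3 * ps i κ q = 0) :
    ∑ a, ps a (rateγ A β i a) q = rateΓ κ β i q := by
  have hkron : ∑ a, kron i a * ps a (divergence β) q = ps i (divergence β) q := by simp [kron]
  have hcomm := sum_ps_ps_eq_ps_divergence hβ i q
  unfold rateγ rateΓ
  simp (disch := fun_prop (disch := simp)) only [ps_add, ps_sub, ps_const_mul]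
  simp only [lap, Fin.sum_univ_three] at hMom hkron hcomm ⊢
  linear_combination (-2) * hMom + hcomm - 2 / 3 * hkron

include hκ in
theorem sum_ps_rateΓ_eq_eight_mul_lap_rateφ (q : Spc) :
    ∑ a, ps a (rateΓ κ β a) q = 8 * lap (rateφ κ β) q := by
  have hlap := sum_ps_lap_eq_lap_divergence hβ q
  unfold rateΓ rateφ
  simp (disch := fun_prop (disch := simp)) only [ps_add, ps_const_mul, Finset.sum_add_distrib,
    hlap]
  simp (disch := fun_prop (disch := simp)) only [lap, ps_add, ps_const_mul, Fin.sum_univ_three]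
  ring

include hA hκ in
theorem sum_sum_ps_ps_rateγ_eq_eight_mul_lap_rateφ
    (hMom : ∀ i p, ∑ a, ps a (A i a) p - 2 / 3 * ps i κ p = 0) (q : Spc) :
    ∑ a, ∑ b, ps a (ps b (rateγ A β a b)) q = 8 * lap (rateφ κ β) q := by
  have hdiv (a : Fin 3) : (fun p => ∑ b, ps b (rateγ A β a b) p) = rateΓ κ β a :=
    funext fun p => sum_ps_rateγ_eq_rateΓ hβ hA a p (hMom a p)
  calc ∑ a, ∑ b, ps a (ps b (rateγ A β a b)) q
      = ∑ a, ps a (fun p => ∑ b, ps b (rateγ A β a b) p) q := by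
        simp (disch := fun_prop (disch := simp)) only [ps_sum]
    _ = ∑ a, ps a (rateΓ κ β a) q := by simp only [hdiv]
    _ = 8 * lap (rateφ κ β) q := sum_ps_rateΓ_eq_eight_mul_lap_rateφ hβ hκ q

end Rates

theorem integrated_solution_preserves_constraints_general
    (β : Fin 3 → Spc → ℝ) (A : Fin 3 → Fin 3 → Spc → ℝ) (κ : Spc → ℝ)
    (hβ : ∀ i, ContDiff ℝ (⊤ : ℕ∞) (β i)) (hA : ∀ i j, ContDiff ℝ (⊤ : ℕ∞) (A i j))
    (hκ : ContDiff ℝ (⊤ : ℕ∞) κ)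
    (γ0 : Fin 3 → Fin 3 → (Fin 3 → ℝ) → ℝ) (Γ0 : Fin 3 → (Fin 3 → ℝ) → ℝ)
    (φ0 : (Fin 3 → ℝ) → ℝ)
    (hγ0 : ∀ i j, ContDiff ℝ (⊤ : ℕ∞) (γ0 i j)) (hΓ0 : ∀ i, ContDiff ℝ (⊤ : ℕ∞) (Γ0 i))
    (hφ0 : ContDiff ℝ (⊤ : ℕ∞) φ0)
    (φ : Spc → ℝ) (γ : Fin 3 → Fin 3 → Spc → ℝ) (Γ : Fin 3 → Spc → ℝ)
    (hφ : ∀ t : ℝ, ∀ x : Fin 3 → ℝ, φ (t, x) = φ0 x +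
      ∫ s in (0:ℝ)..t, (-(1/6) * κ (s, x) + (1/6) * ∑ i, ps i (β i) (s, x)))
    (hγ : ∀ i j, ∀ t : ℝ, ∀ x : Fin 3 → ℝ, γ i j (t, x) = γ0 i j x +
      ∫ s in (0:ℝ)..t, (-2 * A i j (s, x) + ps i (β j) (s, x) + ps j (β i) (s, x)
        - (2/3) * kron i j * ∑ a, ps a (β a) (s, x)))
    (hΓ : ∀ i, ∀ t : ℝ, ∀ x : Fin 3 → ℝ, Γ i (t, x) = Γ0 i x +
      ∫ s in (0:ℝ)..t, (-(4/3) * ps i κ (s, x)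
        + (1/3) * ps i (fun q => ∑ a, ps a (β a) q) (s, x) + lap (β i) (s, x)))
    (hMom : ∀ i p, (∑ a, ps a (A i a) p) - (2/3) * ps i κ p = 0)
    (hHam0γ : ∀ x : Fin 3 → ℝ, (∑ a, ∑ b, d a (d b (γ0 a b)) x) - 8 * lapS φ0 x = 0)
    (hHam0Γ : ∀ x : Fin 3 → ℝ, (∑ a, d a (Γ0 a) x) - 8 * lapS φ0 x = 0)
    (hDef0 : ∀ i, ∀ x : Fin 3 → ℝ, Γ0 i x = ∑ a, d a (γ0 i a) x) :
    (∀ p : Spc, (∑ a, ∑ b, ps a (ps b (γ a b)) p) - 8 * lap φ p = 0) ∧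
    (∀ p : Spc, (∑ a, ps a (Γ a) p) - 8 * lap φ p = 0) ∧
    (∀ i, ∀ p : Spc, Γ i p = ∑ a, ps a (γ i a) p) := by
  have hγ' (i j : Fin 3) : IsTimeIntegral (γ i j) (γ0 i j) (rateγ A β i j) :=
    ⟨hγ0 i j, contDiff_rateγ hβ hA i j, hγ i j⟩
  have hΓ' (i : Fin 3) : IsTimeIntegral (Γ i) (Γ0 i) (rateΓ κ β i) :=
    ⟨hΓ0 i, contDiff_rateΓ hβ hκ i, hΓ i⟩
  have hφ' : IsTimeIntegral φ φ0 (rateφ κ β) := ⟨hφ0, contDiff_rateφ hβ hκ, hφ⟩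
  refine ⟨?_, ?_, fun i p => ?_⟩
  · exact ((IsTimeIntegral.sum fun a => IsTimeIntegral.sum fun b => ((hγ' a b).ps b).ps a).sub
      (hφ'.lap.const_mul 8)).eq_zero hHam0γ
      fun p => sub_eq_zero.2 (sum_sum_ps_ps_rateγ_eq_eight_mul_lap_rateφ hβ hA hκ hMom p)
  · exact ((IsTimeIntegral.sum fun a => (hΓ' a).ps a).sub (hφ'.lap.const_mul 8)).eq_zero hHam0Γ
      fun p => sub_eq_zero.2 (sum_ps_rateΓ_eq_eight_mul_lap_rateφ hβ hκ p)
  · refine sub_eq_zero.1 (((hΓ' i).sub (IsTimeIntegral.sum fun a => (hγ' i a).ps a)).eq_zero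
      (fun x => sub_eq_zero.2 (hDef0 i x)) (fun q => ?_) p)
    exact sub_eq_zero.2 (sum_ps_rateγ_eq_rateΓ hβ hA i q (hMom i q)).symm

/-- If moreover `A`, `κ` satisfy the momentum constraint everywhere and the initial
data satisfy the Hamiltonian and definition constraints, then the constructed fields
satisfy all constraints for all times. -/
theorem integrated_solution_preserves_constraints
    (β : Fin 3 → Spc → ℝ) (A : Fin 3 → Fin 3 → Spc → ℝ) (κ : Spc → ℝ)
    (hβ : ∀ i, ContDiff ℝ (⊤ : ℕ∞) (β i)) (hA : ∀ i j, ContDiff ℝ (⊤ : ℕ∞) (A i j))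
    (hκ : ContDiff ℝ (⊤ : ℕ∞) κ)
    (hAsym : ∀ i j, A i j = A j i)
    (waveA : ∀ i j p, pt (pt (A i j)) p = lap (A i j) p)
    (waveκ : ∀ p, pt (pt κ) p = lap κ p)
    (γ0 : Fin 3 → Fin 3 → (Fin 3 → ℝ) → ℝ) (Γ0 : Fin 3 → (Fin 3 → ℝ) → ℝ)
    (α0 φ0 : (Fin 3 → ℝ) → ℝ)
    (hγ0 : ∀ i j, ContDiff ℝ (⊤ : ℕ∞) (γ0 i j)) (hΓ0 : ∀ i, ContDiff ℝ (⊤ : ℕ∞) (Γ0 i))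
    (hα0 : ContDiff ℝ (⊤ : ℕ∞) α0) (hφ0 : ContDiff ℝ (⊤ : ℕ∞) φ0)
    (hγ0sym : ∀ i j, γ0 i j = γ0 j i)
    (hinitA : ∀ i j, ∀ x : Fin 3 → ℝ, pt (A i j) (0, x) =
      -(1/2) * lapS (γ0 i j) x + (1/2) * (d i (Γ0 j) x + d j (Γ0 i) x)
        - 2 * d i (d j φ0) x - 2 * kron i j * lapS φ0 x
        - d i (d j α0) x + (1/3) * kron i j * lapS α0 x)
    (hinitκ : ∀ x : Fin 3 → ℝ, pt κ (0, x) = -(lapS α0 x))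
    (φ α : Spc → ℝ) (γ : Fin 3 → Fin 3 → Spc → ℝ) (Γ : Fin 3 → Spc → ℝ)
    (hφ : ∀ t : ℝ, ∀ x : Fin 3 → ℝ, φ (t, x) = φ0 x +
      ∫ s in (0:ℝ)..t, (-(1/6) * κ (s, x) + (1/6) * ∑ i, ps i (β i) (s, x)))
    (hα : ∀ t : ℝ, ∀ x : Fin 3 → ℝ, α (t, x) = α0 x - ∫ s in (0:ℝ)..t, κ (s, x))
    (hγ : ∀ i j, ∀ t : ℝ, ∀ x : Fin 3 → ℝ, γ i j (t, x) = γ0 i j x +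
      ∫ s in (0:ℝ)..t, (-2 * A i j (s, x) + ps i (β j) (s, x) + ps j (β i) (s, x)
        - (2/3) * kron i j * ∑ a, ps a (β a) (s, x)))
    (hΓ : ∀ i, ∀ t : ℝ, ∀ x : Fin 3 → ℝ, Γ i (t, x) = Γ0 i x +
      ∫ s in (0:ℝ)..t, (-(4/3) * ps i κ (s, x)
        + (1/3) * ps i (fun q => ∑ a, ps a (β a) q) (s, x) + lap (β i) (s, x)))
    (hMom : ∀ i p, (∑ a, ps a (A i a) p) - (2/3) * ps i κ p = 0)
    (hHam0γ : ∀ x : Fin 3 → ℝ, (∑ a, ∑ b, d a (d b (γ0 a b)) x) - 8 * lapS φ0 x = 0)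
    (hHam0Γ : ∀ x : Fin 3 → ℝ, (∑ a, d a (Γ0 a) x) - 8 * lapS φ0 x = 0)
    (hDef0 : ∀ i, ∀ x : Fin 3 → ℝ, Γ0 i x = ∑ a, d a (γ0 i a) x) :
    (∀ p : Spc, (∑ a, ∑ b, ps a (ps b (γ a b)) p) - 8 * lap φ p = 0) ∧
    (∀ p : Spc, (∑ a, ps a (Γ a) p) - 8 * lap φ p = 0) ∧
    (∀ i, ∀ p : Spc, Γ i p = ∑ a, ps a (γ i a) p) :=
  integrated_solution_preserves_constraints_general β A κ hβ hA hκ γ0 Γ0 φ0 hγ0 hΓ0 hφ0 φ γ Γ hφ hγ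
    hΓ hMom hHam0γ hHam0Γ hDef0
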